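/- arXiv:1003.2804 — 3 statements merged into one kernel-verified Lean document; each statement's English description precedes it below -/
import Mathlib

section
/- Let q be the forward quantities for a fixed response sequence y. Then Σ_{v ∈ Fin k} q(T−1, v) = f(y); that is, the forward recursion, which requires only O(T·k²) arithmetic operations, computes the manifest probability defined as a sum over all k^T latent paths. -/
/-!
Latent Markov model with `k ≥ 1` latent states, `l ≥ 1` response categories and
`T + 1 ≥ 1` time occasions (occasions are indexed by `0, …, T`, so that the last
occasion, written `T − 1` in the paper for `T` occasions, is here `T`).
-/

/-- Extension of a partial latent path `ub : {0,…,t} → Fin k` to all of `ℕ`;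
for `s ≤ t` it returns `ub s`. -/
def extPath {k t : ℕ} (u : Fin (t + 1) → Fin k) (s : ℕ) : Fin k :=
  u ⟨min s t, Nat.lt_succ_of_le (min_le_right s t)⟩

/-- The partial weight of a latent path up to occasion `t`:
`π(ub 0) · ∏_{s=1}^{t} π⁽ˢ⁾(ub (s−1), ub s) · ∏_{s=0}^{t} φ⁽ˢ⁾(y s, ub s)`.
For `t = T` (the last occasion) this is the full weight `w(ub)`. -/
noncomputable def pweight {k l : ℕ} (π : Fin k → ℝ) (P : ℕ → Fin k → Fin k → ℝ)
    (Φ : ℕ → Fin l → Fin k → ℝ) (y : ℕ → Fin l) (t : ℕ) (u : ℕ → Fin k) : ℝ :=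
  π (u 0) * (∏ s ∈ Finset.Icc 1 t, P s (u (s - 1)) (u s)) *
    ∏ s ∈ Finset.range (t + 1), Φ s (y s) (u s)

/-! The forward quantity `q t v` is the total weight of the partial paths on `{0, …, t}`
that end in `v`: one step of the recursion extends each such path by one transition and one
response factor, which is exactly how the partial weight grows with `t`. Summing over the
final state then gives the total weight of all paths. -/

lemma extPath_of_le {k t : ℕ} (ub : Fin (t + 1) → Fin k) {s : ℕ} (hs : s ≤ t) :
    extPath ub s = ub ⟨s, Nat.lt_succ_of_le hs⟩ := by
  simp only [extPath, min_eq_left hs]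

lemma extPath_last {k t : ℕ} (ub : Fin (t + 1) → Fin k) : extPath ub t = ub (Fin.last t) :=
  extPath_of_le ub le_rfl

lemma extPath_snoc_of_le {k t : ℕ} (ub : Fin (t + 1) → Fin k) (v : Fin k) {s : ℕ}
    (hs : s ≤ t) : extPath (Fin.snoc ub v) s = extPath ub s := by
  rw [extPath_of_le _ (hs.trans t.le_succ), extPath_of_le _ hs]
  exact Fin.snoc_castSucc (α := fun _ => Fin k) (i := ⟨s, Nat.lt_succ_of_le hs⟩) ..

lemma extPath_snoc_self {k t : ℕ} (ub : Fin t → Fin k) (v : Fin k) :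
    extPath (Fin.snoc ub v) t = v := by
  rw [extPath_last, Fin.snoc_last]

section pweight

variable {k l : ℕ} (π : Fin k → ℝ) (P : ℕ → Fin k → Fin k → ℝ) (Φ : ℕ → Fin l → Fin k → ℝ)
  (y : ℕ → Fin l)

lemma pweight_zero (u : ℕ → Fin k) : pweight π P Φ y 0 u = π (u 0) * Φ 0 (y 0) (u 0) := by
  simp [pweight]

lemma pweight_succ (t : ℕ) (u : ℕ → Fin k) :
    pweight π P Φ y (t + 1) u =
      pweight π P Φ y t u * (P (t + 1) (u t) (u (t + 1)) * Φ (t + 1) (y (t + 1)) (u (t + 1))) := by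
  simp only [pweight, Finset.prod_Icc_succ_top (Nat.le_add_left 1 t), Finset.prod_range_succ,
    Nat.add_sub_cancel]
  ring

lemma pweight_congr {t : ℕ} {u u' : ℕ → Fin k} (h : ∀ s ≤ t, u s = u' s) :
    pweight π P Φ y t u = pweight π P Φ y t u' := by
  have hP : ∀ s ∈ Finset.Icc 1 t, P s (u (s - 1)) (u s) = P s (u' (s - 1)) (u' s) :=
    fun s hs => by
      rw [h s (Finset.mem_Icc.1 hs).2, h (s - 1) ((s.sub_le 1).trans (Finset.mem_Icc.1 hs).2)]
  have hΦ : ∀ s ∈ Finset.range (t + 1), Φ s (y s) (u s) = Φ s (y s) (u' s) :=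
    fun s hs => by rw [h s (Nat.lt_succ_iff.1 (Finset.mem_range.1 hs))]
  rw [pweight, pweight, h 0 t.zero_le, Finset.prod_congr rfl hP, Finset.prod_congr rfl hΦ]

lemma pweight_extPath_snoc (t : ℕ) (ub : Fin (t + 1) → Fin k) (v : Fin k) :
    pweight π P Φ y (t + 1) (extPath (Fin.snoc ub v)) =
      pweight π P Φ y t (extPath ub) *
        (P (t + 1) (ub (Fin.last t)) v * Φ (t + 1) (y (t + 1)) v) := by
  rw [pweight_succ, pweight_congr π P Φ y fun s hs => extPath_snoc_of_le ub v hs,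
    extPath_snoc_of_le ub v le_rfl, extPath_last, extPath_snoc_self]

end pweight

lemma Fintype.sum_pi_fin_succ_eq_sum_snoc {α M : Type*} [Fintype α] [AddCommMonoid M] {t : ℕ}
    (f : (Fin (t + 1) → α) → M) :
    ∑ ub, f ub = ∑ v, ∑ ub : Fin t → α, f (Fin.snoc ub v) := by
  rw [← (Fin.snocEquiv fun _ => α).sum_comp, Fintype.sum_prod_type]
  rfl

lemma forward_eq_sum_pweight {k l T : ℕ} {π : Fin k → ℝ} {P : ℕ → Fin k → Fin k → ℝ}
    {Φ : ℕ → Fin l → Fin k → ℝ} {y : ℕ → Fin l} {q : ℕ → Fin k → ℝ}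
    (hq0 : ∀ u, q 0 u = π u * Φ 0 (y 0) u)
    (hqrec : ∀ t, 1 ≤ t → t ≤ T → ∀ v,
      q t v = (∑ u, q (t - 1) u * P t u v) * Φ t (y t) v) :
    ∀ t ≤ T, ∀ v, q t v = ∑ ub : Fin t → Fin k, pweight π P Φ y t (extPath (Fin.snoc ub v)) := by
  intro t
  induction t with
  | zero =>
    intro _ v
    rw [Fintype.sum_unique, pweight_zero, extPath_snoc_self, hq0]
  | succ t ih =>
    intro ht v
    calc q (t + 1) v
        = ∑ u, ∑ ub : Fin t → Fin k, pweight π P Φ y t (extPath (Fin.snoc ub u)) *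
            (P (t + 1) u v * Φ (t + 1) (y (t + 1)) v) := by
          rw [hqrec (t + 1) t.succ_pos ht v, Nat.add_sub_cancel, Finset.sum_mul]
          refine Finset.sum_congr rfl fun u _ => ?_
          rw [ih (Nat.le_of_succ_le ht) u, Finset.sum_mul, Finset.sum_mul]
          exact Finset.sum_congr rfl fun ub _ => by ring
      _ = ∑ ub : Fin (t + 1) → Fin k, pweight π P Φ y t (extPath ub) *
            (P (t + 1) (ub (Fin.last t)) v * Φ (t + 1) (y (t + 1)) v) := by
          simp only [Fintype.sum_pi_fin_succ_eq_sum_snoc (t := t), Fin.snoc_last]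
      _ = ∑ ub : Fin (t + 1) → Fin k, pweight π P Φ y (t + 1) (extPath (Fin.snoc ub v)) := by
          simp only [pweight_extPath_snoc]

theorem sum_forward_eq_manifest_general
    (k l T : ℕ)
    (π : Fin k → ℝ) (P : ℕ → Fin k → Fin k → ℝ) (Φ : ℕ → Fin l → Fin k → ℝ)
    (y : ℕ → Fin l) (q : ℕ → Fin k → ℝ)
    (hq0 : ∀ u, q 0 u = π u * Φ 0 (y 0) u)
    (hqrec : ∀ t, 1 ≤ t → t ≤ T → ∀ v,
      q t v = (∑ u, q (t - 1) u * P t u v) * Φ t (y t) v) :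
    (∑ v, q T v) = ∑ ub : Fin (T + 1) → Fin k, pweight π P Φ y T (extPath ub) := by
  rw [Fintype.sum_pi_fin_succ_eq_sum_snoc]
  exact Finset.sum_congr rfl fun v _ => forward_eq_sum_pweight hq0 hqrec T le_rfl v

/-- Summing the forward quantities at the last occasion recovers the
manifest probability `f(y)`, defined as the sum of `w(ub)` over all `k^(T+1)` latent paths. -/
theorem sum_forward_eq_manifest
    (k l T : ℕ) (hk : 1 ≤ k) (hl : 1 ≤ l)
    (π : Fin k → ℝ) (P : ℕ → Fin k → Fin k → ℝ) (Φ : ℕ → Fin l → Fin k → ℝ)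
    (y : ℕ → Fin l) (q : ℕ → Fin k → ℝ)
    (hq0 : ∀ u, q 0 u = π u * Φ 0 (y 0) u)
    (hqrec : ∀ t, 1 ≤ t → t ≤ T → ∀ v,
      q t v = (∑ u, q (t - 1) u * P t u v) * Φ t (y t) v) :
    (∑ v, q T v) = ∑ ub : Fin (T + 1) → Fin k, pweight π P Φ y T (extPath ub) :=
  sum_forward_eq_manifest_general k l T π P Φ y q hq0 hqrec
end

section
/- Let n ≥ 1 and for each i = 1,…,n let g_i, g'_i : Fin K → ℝ be strictly positive. If Σ_{i=1}^n Σ_u (g_i(u)/Σ_v g_i(v)) · log g'_i(u) ≥ Σ_{i=1}^n Σ_u (g_i(u)/Σ_v g_i(v)) · log g_i(u), then Σ_{i=1}^n log(Σ_u g'_i(u)) ≥ Σ_{i=1}^n log(Σ_u g_i(u)). In words: if an EM update does not decrease the expected complete-data log-likelihood, then the observed-data log-likelihood does not decrease, so the EM algorithm is monotone. -/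
/-!
By Jensen's inequality for the concave logarithm, with the posterior weights `g i u / ∑ v, g i v`,
the expected log-ratio `∑ u, (g i u / ∑ v, g i v) * log (g' i u / g i u)` is at most the log of the
expected ratio, which is `log ((∑ u, g' i u) / ∑ u, g i u)`. Summing over subjects, the gain in the
expected complete-data log-likelihood bounds the gain in the observed-data log-likelihood.
-/

open Finset Real

theorem Real.sum_div_sum_mul_log_div_le_log_sum_sub_log_sum {ι : Type*} [Fintype ι]
    (a b : ι → ℝ) (ha : ∀ i, 0 < a i) (hb : ∀ i, 0 < b i) :
    ∑ i, (a i / ∑ j, a j) * log (b i / a i) ≤ log (∑ i, b i) - log (∑ i, a i) := by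
  rcases isEmpty_or_nonempty ι with hι | hι
  · simp
  have hA : 0 < ∑ j, a j := sum_pos (fun i _ ↦ ha i) univ_nonempty
  have hweights : ∑ i, a i / ∑ j, a j = 1 := by rw [← sum_div, div_self hA.ne']
  have hmean : ∑ i, (a i / ∑ j, a j) * (b i / a i) = (∑ i, b i) / ∑ j, a j := by
    rw [sum_div]
    refine sum_congr rfl fun i _ ↦ ?_
    field_simp [(ha i).ne']
  have hB : 0 < ∑ i, b i := sum_pos (fun i _ ↦ hb i) univ_nonempty
  rw [← log_div hB.ne' hA.ne', ← hmean]
  exact strictConcaveOn_log_Ioi.concaveOn.le_map_sum (fun i _ ↦ (div_pos (ha i) hA).le)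
    hweights (fun i _ ↦ Set.mem_Ioi.mpr (div_pos (hb i) (ha i)))

theorem em_monotone_general
    (n K : ℕ)
    (g g' : Fin n → Fin K → ℝ)
    (hg : ∀ i u, 0 < g i u) (hg' : ∀ i u, 0 < g' i u)
    (h : ∑ i, ∑ u, (g i u / ∑ v, g i v) * Real.log (g' i u) ≥
      ∑ i, ∑ u, (g i u / ∑ v, g i v) * Real.log (g i u)) :
    ∑ i, Real.log (∑ u, g' i u) ≥ ∑ i, Real.log (∑ u, g i u) := by
  have hsubject : ∀ i, ∑ u, (g i u / ∑ v, g i v) * log (g' i u)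
      - ∑ u, (g i u / ∑ v, g i v) * log (g i u) ≤ log (∑ u, g' i u) - log (∑ u, g i u) := by
    intro i
    rw [← sum_sub_distrib]
    convert sum_div_sum_mul_log_div_le_log_sum_sub_log_sum (g i) (g' i) (hg i) (hg' i) using 2
    rw [log_div (hg' i _).ne' (hg i _).ne', mul_sub]
  have htotal := sum_le_sum fun i (_ : i ∈ univ) ↦ hsubject i
  rw [sum_sub_distrib, sum_sub_distrib] at htotal
  linarith

/-- Monotonicity of the EM algorithm: if an update does not decrease
the expected complete-data log-likelihood, then the observed-data log-likelihood does
not decrease. -/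
theorem em_monotone
    (n K : ℕ) (hn : 1 ≤ n) (hK : 1 ≤ K)
    (g g' : Fin n → Fin K → ℝ)
    (hg : ∀ i u, 0 < g i u) (hg' : ∀ i u, 0 < g' i u)
    (h : ∑ i, ∑ u, (g i u / ∑ v, g i v) * Real.log (g' i u) ≥
      ∑ i, ∑ u, (g i u / ∑ v, g i v) * Real.log (g i u)) :
    ∑ i, Real.log (∑ u, g' i u) ≥ ∑ i, Real.log (∑ u, g i u) :=
  em_monotone_general n K g g' hg hg' h
end

section
/- With V, a, n, π and L as in the multinomial-logit M-step setting, L is twice differentiable and its second derivative (Hessian bilinear form) at every δ, applied to directions h₁, h₂ ∈ EuclideanSpace ℝ (Fin d), equals −n · ( Σ_v π(v, δ) · ⟪V v, h₁⟫ · ⟪V v, h₂⟫ − (Σ_v π(v, δ) · ⟪V v, h₁⟫) · (Σ_v π(v, δ) · ⟪V v, h₂⟫) ); i.e. minus the Hessian equals n · Vᵀ(diag(π) − π πᵀ)V. -/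
open scoped RealInnerProductSpace

/-!
Since `log π(v, δ) = ⟪V v, δ⟫ - LSE(δ)` with `LSE(δ) = log Σ_w exp ⟪V w, δ⟫`, the objective is
`L(δ) = Σ_v a(v) ⟪V v, δ⟫ - n · LSE(δ)`: a linear function minus `n` times log-sum-exp.
The gradient of log-sum-exp is the softmax mean `Σ_v π(v, δ) ⟪V v, ·⟫`, and writing
`π(v, δ) = exp (⟪V v, δ⟫ - LSE(δ))` shows that `π(v, ·)` has derivative `π(v, δ) (⟪V v, ·⟫ - mean)`.
Differentiating the mean once more gives the softmax covariance, so the Hessian of `L` is `-n`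
times that covariance.
-/

namespace Softmax

variable {ι E : Type*} [Fintype ι] [NormedAddCommGroup E] [NormedSpace ℝ E]

noncomputable def logSumExp (ℓ : ι → E →L[ℝ] ℝ) (x : E) : ℝ :=
  Real.log (∑ w, Real.exp (ℓ w x))

noncomputable def softmax (ℓ : ι → E →L[ℝ] ℝ) (x : E) (v : ι) : ℝ :=
  Real.exp (ℓ v x) / ∑ w, Real.exp (ℓ w x)

noncomputable def mean (ℓ : ι → E →L[ℝ] ℝ) (x : E) : E →L[ℝ] ℝ :=
  ∑ v, softmax ℓ x v • ℓ v

noncomputable def covariance (ℓ : ι → E →L[ℝ] ℝ) (x h₁ h₂ : E) : ℝ :=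
  (∑ v, softmax ℓ x v * (ℓ v h₁ * ℓ v h₂)) -
    (∑ v, softmax ℓ x v * ℓ v h₁) * (∑ v, softmax ℓ x v * ℓ v h₂)

variable (ℓ : ι → E →L[ℝ] ℝ)

theorem sum_exp_pos [Nonempty ι] (x : E) : 0 < ∑ w, Real.exp (ℓ w x) :=
  Finset.sum_pos (fun _ _ => Real.exp_pos _) Finset.univ_nonempty

theorem softmax_eq_exp_sub_logSumExp [Nonempty ι] (x : E) (v : ι) :
    softmax ℓ x v = Real.exp (ℓ v x - logSumExp ℓ x) := by
  rw [Real.exp_sub, logSumExp, Real.exp_log (sum_exp_pos ℓ x), softmax]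

theorem log_softmax [Nonempty ι] (x : E) (v : ι) :
    Real.log (softmax ℓ x v) = ℓ v x - logSumExp ℓ x := by
  rw [softmax_eq_exp_sub_logSumExp, Real.log_exp]

theorem hasFDerivAt_logSumExp [Nonempty ι] (x : E) :
    HasFDerivAt (logSumExp ℓ) (mean ℓ x) x := by
  have hsum : HasFDerivAt (fun y => ∑ w, Real.exp (ℓ w y)) (∑ w, Real.exp (ℓ w x) • ℓ w) x :=
    HasFDerivAt.fun_sum fun w _ => (ℓ w).hasFDerivAt.exp
  refine (hsum.log (sum_exp_pos ℓ x).ne').congr_fderiv ?_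
  simp only [mean, softmax, Finset.smul_sum, smul_smul, div_eq_inv_mul]

theorem hasFDerivAt_softmax [Nonempty ι] (x : E) (v : ι) :
    HasFDerivAt (fun y => softmax ℓ y v) (softmax ℓ x v • (ℓ v - mean ℓ x)) x := by
  simp_rw [softmax_eq_exp_sub_logSumExp]
  exact ((ℓ v).hasFDerivAt.sub (hasFDerivAt_logSumExp ℓ x)).exp

theorem hasFDerivAt_mean [Nonempty ι] (x : E) :
    HasFDerivAt (mean ℓ) (∑ v, (softmax ℓ x v • (ℓ v - mean ℓ x)).smulRight (ℓ v)) x :=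
  HasFDerivAt.fun_sum fun v _ => (hasFDerivAt_softmax ℓ x v).smul_const (ℓ v)

theorem fderiv_mean_apply [Nonempty ι] (x h₁ h₂ : E) :
    fderiv ℝ (mean ℓ) x h₁ h₂ = covariance ℓ x h₁ h₂ := by
  simp only [(hasFDerivAt_mean ℓ x).fderiv, covariance, sum_apply,
    ContinuousLinearMap.smulRight_apply, smul_apply, sub_apply, mean, smul_eq_mul, Finset.mul_sum, ← Finset.sum_sub_distrib]
  exact Finset.sum_congr rfl fun v _ => by ring

theorem hasFDerivAt_sum_mul_log_softmax [Nonempty ι] (a : ι → ℝ) (x : E) :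
    HasFDerivAt (fun y => ∑ v, a v * Real.log (softmax ℓ y v))
      (∑ v, a v • ℓ v - (∑ v, a v) • mean ℓ x) x := by
  simp_rw [log_softmax]
  refine (HasFDerivAt.fun_sum fun v _ =>
    ((ℓ v).hasFDerivAt.sub (hasFDerivAt_logSumExp ℓ x)).const_mul (a v)).congr_fderiv ?_
  simp only [smul_sub, Finset.sum_sub_distrib, Finset.sum_smul]

theorem differentiable_sum_mul_log_softmax [Nonempty ι] (a : ι → ℝ) :
    Differentiable ℝ (fun y => ∑ v, a v * Real.log (softmax ℓ y v)) :=
  fun x => (hasFDerivAt_sum_mul_log_softmax ℓ a x).differentiableAt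

theorem fderiv_sum_mul_log_softmax [Nonempty ι] (a : ι → ℝ) :
    fderiv ℝ (fun y => ∑ v, a v * Real.log (softmax ℓ y v)) =
      fun x => ∑ v, a v • ℓ v - (∑ v, a v) • mean ℓ x :=
  funext fun x => (hasFDerivAt_sum_mul_log_softmax ℓ a x).fderiv

theorem differentiable_fderiv_sum_mul_log_softmax [Nonempty ι] (a : ι → ℝ) :
    Differentiable ℝ (fderiv ℝ (fun y => ∑ v, a v * Real.log (softmax ℓ y v))) := by
  rw [fderiv_sum_mul_log_softmax]
  exact fun x => (differentiableAt_const _).sub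
    ((hasFDerivAt_mean ℓ x).differentiableAt.fun_const_smul _)

theorem fderiv_fderiv_sum_mul_log_softmax_apply [Nonempty ι] (a : ι → ℝ) (x h₁ h₂ : E) :
    fderiv ℝ (fderiv ℝ (fun y => ∑ v, a v * Real.log (softmax ℓ y v))) x h₁ h₂ =
      -((∑ v, a v) * covariance ℓ x h₁ h₂) := by
  rw [fderiv_sum_mul_log_softmax, fderiv_const_sub,
    fderiv_fun_const_smul (hasFDerivAt_mean ℓ x).differentiableAt]
  simp only [neg_apply, smul_apply, fderiv_mean_apply, smul_eq_mul]

end Softmax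

open Softmax

theorem multinomial_logit_mstep_hessian_general
    (d k : ℕ) (hk : 1 ≤ k)
    (V : Fin k → EuclideanSpace ℝ (Fin d))
    (a : Fin k → ℝ)
    (p : Fin k → EuclideanSpace ℝ (Fin d) → ℝ)
    (hp : ∀ v δ, p v δ = Real.exp ⟪V v, δ⟫ / ∑ w, Real.exp ⟪V w, δ⟫)
    (L : EuclideanSpace ℝ (Fin d) → ℝ)
    (hL : ∀ δ, L δ = ∑ v, a v * Real.log (p v δ)) :
    Differentiable ℝ L ∧ Differentiable ℝ (fderiv ℝ L) ∧
      ∀ δ h₁ h₂,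
        fderiv ℝ (fderiv ℝ L) δ h₁ h₂ =
          -((∑ w, a w) *
            ((∑ v, p v δ * (⟪V v, h₁⟫ * ⟪V v, h₂⟫)) -
              (∑ v, p v δ * ⟪V v, h₁⟫) * (∑ v, p v δ * ⟪V v, h₂⟫))) := by
  have : Nonempty (Fin k) := Fin.pos_iff_nonempty.mp hk
  let ℓ : Fin k → EuclideanSpace ℝ (Fin d) →L[ℝ] ℝ := fun v => innerSL ℝ (V v)
  obtain rfl : p = fun v δ => softmax ℓ δ v := funext₂ hp
  obtain rfl : L = fun δ => ∑ v, a v * Real.log (softmax ℓ δ v) := funext hL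
  exact ⟨differentiable_sum_mul_log_softmax ℓ a, differentiable_fderiv_sum_mul_log_softmax ℓ a,
    fderiv_fderiv_sum_mul_log_softmax_apply ℓ a⟩

/-- Hessian of the multinomial-logit (softmax) component of the
expected complete-data log-likelihood in the M-step: `L` is twice differentiable with
Hessian bilinear form
`(h₁,h₂) ↦ −n·(Σ_v π(v,δ)⟪V v,h₁⟫⟪V v,h₂⟫ − (Σ_v π(v,δ)⟪V v,h₁⟫)(Σ_v π(v,δ)⟪V v,h₂⟫))`,
i.e. minus the Hessian equals `n · Vᵀ(diag(π) − π πᵀ)V`. -/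
theorem multinomial_logit_mstep_hessian
    (d k : ℕ) (hk : 1 ≤ k)
    (V : Fin k → EuclideanSpace ℝ (Fin d))
    (a : Fin k → ℝ) (ha : ∀ v, 0 ≤ a v)
    (p : Fin k → EuclideanSpace ℝ (Fin d) → ℝ)
    (hp : ∀ v δ, p v δ = Real.exp ⟪V v, δ⟫ / ∑ w, Real.exp ⟪V w, δ⟫)
    (L : EuclideanSpace ℝ (Fin d) → ℝ)
    (hL : ∀ δ, L δ = ∑ v, a v * Real.log (p v δ)) :
    Differentiable ℝ L ∧ Differentiable ℝ (fderiv ℝ L) ∧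
      ∀ δ h₁ h₂,
        fderiv ℝ (fderiv ℝ L) δ h₁ h₂ =
          -((∑ w, a w) *
            ((∑ v, p v δ * (⟪V v, h₁⟫ * ⟪V v, h₂⟫)) -
              (∑ v, p v δ * ⟪V v, h₁⟫) * (∑ v, p v δ * ⟪V v, h₂⟫))) :=
  multinomial_logit_mstep_hessian_general d k hk V a p hp L hL
end
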